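/- arXiv:2508.06766 — 6 statements merged into one kernel-verified Lean document; each statement's English description precedes it below -/
import Mathlib

section
/- For every integer n ≥ 0 and every k ∈ ℤ, the n-th coefficient of the formal power series ∑_{m=0}^{n} (1 - exp(-X))^m · (αm + a)^{-k} in ℂ⟦X⟧, multiplied by n!, equals (-1)^n ∑_{m=0}^{n} (-1)^m · m! · {n m} · (αm + a)^{-k}. (Since (1 - exp(-X))^m has X-adic order m, the terms with m > n contribute nothing to the coefficient of X^n, so this finite sum computes the coefficient of X^n in the generating function Φ(1 - e^{-t}, k, α, a) = ∑_{m=0}^{∞} (1-e^{-t})^m/(αm+a)^k of the two-parameter Hurwitz-Lerch type poly-Bernoulli numbers.) -/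
open PowerSeries Finset

/-- Unsigned Stirling numbers of the first kind. -/
def stirling1 : ℕ → ℕ → ℕ
  | 0, 0 => 1
  | 0, _ + 1 => 0
  | _ + 1, 0 => 0
  | n + 1, m + 1 => stirling1 n m + n * stirling1 n (m + 1)

/-- Stirling numbers of the second kind. -/
def stirling2 : ℕ → ℕ → ℕ
  | 0, 0 => 1
  | 0, _ + 1 => 0
  | _ + 1, 0 => 0
  | n + 1, m + 1 => stirling2 n m + (m + 1) * stirling2 n (m + 1)

/-- Two-parameter Hurwitz-Lerch type poly-Bernoulli numbers
    `B_n^{(k)}(α,a) = (-1)^n ∑_{m=0}^n (-1)^m m! {n m} (αm+a)^{-k}`. -/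
noncomputable def polyBernoulli (k : ℤ) (α a : ℂ) (n : ℕ) : ℂ :=
  (-1 : ℂ) ^ n * ∑ m ∈ Finset.range (n + 1),
    (-1 : ℂ) ^ m * (m.factorial : ℂ) * (stirling2 n m : ℂ) * (α * m + a) ^ (-k)

/-- Two-parameter Hurwitz-Lerch type poly-Cauchy numbers of the first kind
    `c_n^{(k)}(α,a) = (-1)^n ∑_{m=0}^n (-1)^m [n m] (αm+a)^{-k}`. -/
noncomputable def polyCauchy1 (k : ℤ) (α a : ℂ) (n : ℕ) : ℂ :=
  (-1 : ℂ) ^ n * ∑ m ∈ Finset.range (n + 1),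
    (-1 : ℂ) ^ m * (stirling1 n m : ℂ) * (α * m + a) ^ (-k)

/-- Two-parameter Hurwitz-Lerch type poly-Cauchy numbers of the second kind
    `ĉ_n^{(k)}(α,a) = (-1)^n ∑_{m=0}^n [n m] (αm+a)^{-k}`. -/
noncomputable def polyCauchy2 (k : ℤ) (α a : ℂ) (n : ℕ) : ℂ :=
  (-1 : ℂ) ^ n * ∑ m ∈ Finset.range (n + 1),
    (stirling1 n m : ℂ) * (α * m + a) ^ (-k)

/-- The formal power series `log(1+X) = ∑_{j≥1} (-1)^{j-1} X^j / j` in `ℂ⟦X⟧`. -/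
noncomputable def formalLog : PowerSeries ℂ :=
  PowerSeries.mk fun j => if j = 0 then 0 else (-1 : ℂ) ^ (j - 1) / j

/-
Writing `c(n, m) = n! [Xⁿ] (eˣ - 1)ᵐ`, the identity `d/dX (eˣ - 1)ᵐ⁺¹ = (m + 1) ((eˣ - 1)ᵐ⁺¹ + (eˣ - 1)ᵐ)`
gives `c(n + 1, m + 1) = (m + 1) (c(n, m + 1) + c(n, m))`, which is the recursion of `m! {n m}`;
so `(eˣ - 1)ᵐ` is the exponential generating function of `m! {n m}`. Since
`1 - e⁻ˣ = -((eˣ - 1) ∘ (-X))`, the coefficients of `(1 - e⁻ˣ)ᵐ` differ from these by the sign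
`(-1)ⁿ⁺ᵐ`, and the theorem follows term by term.
-/

theorem stirling2_eq_stirlingSecond : stirling2 = Nat.stirlingSecond := by
  funext n m
  induction n generalizing m with
  | zero => cases m <;> rfl
  | succ n ih =>
    cases m with
    | zero => rfl
    | succ m => rw [Nat.stirlingSecond_succ_succ, stirling2, ih, ih, add_comm]

namespace PowerSeries

variable {A : Type*} [CommRing A] [Algebra ℚ A]

theorem derivative_exp_sub_one_pow_succ (m : ℕ) :
    d⁄dX A ((exp A - 1) ^ (m + 1)) = (m + 1) • ((exp A - 1) ^ (m + 1) + (exp A - 1) ^ m) := by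
  rw [Derivation.leibniz_pow, map_sub, derivative_exp, derivative_one, sub_zero,
    Nat.add_sub_cancel, smul_eq_mul]
  congr 1
  ring

theorem factorial_mul_coeff_exp_sub_one_pow (n m : ℕ) :
    (n.factorial : A) * coeff n ((exp A - 1) ^ m) = m.factorial * Nat.stirlingSecond n m := by
  induction n generalizing m with
  | zero => cases m <;> simp
  | succ n ih =>
    cases m with
    | zero => simp [coeff_one]
    | succ m =>
      have hrec := coeff_derivative ((exp A - 1) ^ (m + 1)) n
      rw [derivative_exp_sub_one_pow_succ, map_nsmul, map_add, nsmul_eq_mul] at hrec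
      have ih_succ := ih (m + 1)
      rw [Nat.factorial_succ] at ih_succ
      rw [Nat.stirlingSecond_succ_succ, Nat.factorial_succ, Nat.factorial_succ]
      push_cast at hrec ih_succ ⊢
      linear_combination (n.factorial : A) * hrec.symm + ((m : A) + 1) * (ih_succ + ih m)

theorem one_sub_rescale_neg_one_exp :
    1 - rescale (-1 : A) (exp A) = -rescale (-1 : A) (exp A - 1) := by
  rw [map_sub, map_one]
  ring

theorem factorial_mul_coeff_one_sub_rescale_neg_one_exp_pow (n m : ℕ) :
    (n.factorial : A) * coeff n ((1 - rescale (-1 : A) (exp A)) ^ m) =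
      (-1) ^ (n + m) * (m.factorial * Nat.stirlingSecond n m) := by
  rw [one_sub_rescale_neg_one_exp, neg_pow, ← map_pow, show (-1 : A⟦X⟧) ^ m = C ((-1) ^ m) by simp,
    coeff_C_mul, coeff_rescale, ← factorial_mul_coeff_exp_sub_one_pow, pow_add]
  ring

end PowerSeries

theorem stmt0_general (α a : ℂ) (n : ℕ) (k : ℤ) :
    (n.factorial : ℂ) * PowerSeries.coeff (R := ℂ) n
      (∑ m ∈ Finset.range (n + 1),
        PowerSeries.C (R := ℂ) ((α * m + a) ^ (-k)) *
          (1 - PowerSeries.rescale (-1) (PowerSeries.exp ℂ)) ^ m) =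
    (-1 : ℂ) ^ n * ∑ m ∈ Finset.range (n + 1),
      (-1 : ℂ) ^ m * (m.factorial : ℂ) * (stirling2 n m : ℂ) * (α * m + a) ^ (-k) := by
  simp only [map_sum, PowerSeries.coeff_C_mul, Finset.mul_sum]
  refine Finset.sum_congr rfl fun m _ => ?_
  rw [mul_left_comm, PowerSeries.factorial_mul_coeff_one_sub_rescale_neg_one_exp_pow,
    stirling2_eq_stirlingSecond, pow_add]
  ring

theorem stmt0 (α a : ℂ) (hα : α ≠ 0) (ha : ∀ m : ℕ, α * m + a ≠ 0) (n : ℕ) (k : ℤ) :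
    (n.factorial : ℂ) * PowerSeries.coeff (R := ℂ) n
      (∑ m ∈ Finset.range (n + 1),
        PowerSeries.C (R := ℂ) ((α * m + a) ^ (-k)) *
          (1 - PowerSeries.rescale (-1) (PowerSeries.exp ℂ)) ^ m) =
    (-1 : ℂ) ^ n * ∑ m ∈ Finset.range (n + 1),
      (-1 : ℂ) ^ m * (m.factorial : ℂ) * (stirling2 n m : ℂ) * (α * m + a) ^ (-k) :=
  stmt0_general α a n k
end

section
/- For every integer n ≥ 0 and every k ∈ ℤ, the n-th coefficient of the formal power series ∑_{m=0}^{n} L(X)^m / (m! · (αm + a)^{k}) in ℂ⟦X⟧, where L(X) = ∑_{j≥1} (-1)^{j-1} X^j / j is the formal logarithm log(1+X), multiplied by n!, equals (-1)^n ∑_{m=0}^{n} (-1)^m · [n m] · (αm + a)^{-k}. (Since L(X)^m has X-adic order m, the terms with m > n contribute nothing to the coefficient of X^n, so this finite sum computes the coefficient of X^n in the generating function Φ_f(ln(1+t), k, α, a) = ∑_{m=0}^{∞} (ln(1+t))^m/(m!(αm+a)^k) of the two-parameter Hurwitz-Lerch type poly-Cauchy numbers of the first kind.) -/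
open PowerSeries Finset

/-! Since `(1 + X) L' = 1` for `L = log(1 + X)`, applying `(1 + X) d/dX` to `L^(m+1)` gives
`(m + 1) L^m`. Comparing coefficients of `X^n` shows that `n! [X^n] L^m` satisfies the recurrence
of `(-1)^(n+m) m! [n m]`, and the two agree for `n = 0`. -/

theorem PowerSeries.coeff_one_add_X_mul_derivative {R : Type*} [CommSemiring R] (g : R⟦X⟧)
    (n : ℕ) :
    coeff n ((1 + X) * d⁄dX R g) = (n + 1) * coeff (n + 1) g + n * coeff n g := by
  rw [add_mul, one_mul, map_add, coeff_derivative]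
  cases n with
  | zero => simp
  | succ n =>
    rw [coeff_succ_X_mul, coeff_derivative]
    push_cast
    ring

theorem constantCoeff_formalLog : constantCoeff formalLog = 0 := by
  simp [formalLog]

theorem coeff_derivative_formalLog (n : ℕ) : coeff n (d⁄dX ℂ formalLog) = (-1) ^ n := by
  rw [coeff_derivative, formalLog, coeff_mk, if_neg n.succ_ne_zero, Nat.add_sub_cancel]
  push_cast
  exact div_mul_cancel₀ _ (Nat.cast_add_one_ne_zero n)

theorem one_add_X_mul_derivative_formalLog : (1 + X) * d⁄dX ℂ formalLog = 1 := by
  ext n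
  rw [add_mul, one_mul, map_add, coeff_one]
  cases n with
  | zero => simp [coeff_derivative_formalLog]
  | succ n => simp [coeff_succ_X_mul, coeff_derivative_formalLog, pow_succ]

theorem one_add_X_mul_derivative_formalLog_pow_succ (m : ℕ) :
    (1 + X) * d⁄dX ℂ (formalLog ^ (m + 1)) = C ((m : ℂ) + 1) * formalLog ^ m := by
  rw [derivative_pow, Nat.add_sub_cancel, mul_left_comm, one_add_X_mul_derivative_formalLog,
    mul_one, map_add, map_one, map_natCast, Nat.cast_succ]

theorem factorial_mul_coeff_succ_formalLog_pow_succ (n m : ℕ) :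
    ((n + 1).factorial : ℂ) * coeff (n + 1) (formalLog ^ (m + 1)) =
      (m + 1) * (n.factorial * coeff n (formalLog ^ m)) -
        n * (n.factorial * coeff n (formalLog ^ (m + 1))) := by
  have h := congrArg (coeff n) (one_add_X_mul_derivative_formalLog_pow_succ m)
  rw [coeff_one_add_X_mul_derivative, coeff_C_mul] at h
  rw [Nat.factorial_succ]
  push_cast
  linear_combination (n.factorial : ℂ) * h

theorem factorial_mul_coeff_formalLog_pow (n m : ℕ) :
    (n.factorial : ℂ) * coeff n (formalLog ^ m) = (-1) ^ (n + m) * m.factorial * stirling1 n m := by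
  induction n generalizing m with
  | zero =>
    cases m with
    | zero => simp [stirling1]
    | succ m => simp [coeff_zero_eq_constantCoeff, constantCoeff_formalLog, stirling1]
  | succ n ih =>
    cases m with
    | zero => simp [coeff_one, stirling1]
    | succ m =>
      rw [factorial_mul_coeff_succ_formalLog_pow_succ, ih, ih, stirling1, Nat.factorial_succ]
      push_cast
      ring

theorem stmt1_general (α a : ℂ) (n : ℕ) (k : ℤ) :
    (n.factorial : ℂ) * PowerSeries.coeff n
      (∑ m ∈ Finset.range (n + 1),
        PowerSeries.C (((m.factorial : ℂ) * (α * m + a) ^ k)⁻¹) * formalLog ^ m) =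
    (-1 : ℂ) ^ n * ∑ m ∈ Finset.range (n + 1),
      (-1 : ℂ) ^ m * (stirling1 n m : ℂ) * (α * m + a) ^ (-k) := by
  rw [map_sum, mul_sum, mul_sum]
  refine sum_congr rfl fun m _ => ?_
  have hm : (m.factorial : ℂ) ≠ 0 := mod_cast m.factorial_ne_zero
  rw [coeff_C_mul, mul_left_comm, factorial_mul_coeff_formalLog_pow, mul_inv, ← zpow_neg, pow_add]
  field_simp

theorem stmt1 (α a : ℂ) (hα : α ≠ 0) (ha : ∀ m : ℕ, α * m + a ≠ 0) (n : ℕ) (k : ℤ) :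
    (n.factorial : ℂ) * PowerSeries.coeff n
      (∑ m ∈ Finset.range (n + 1),
        PowerSeries.C (((m.factorial : ℂ) * (α * m + a) ^ k)⁻¹) * formalLog ^ m) =
    (-1 : ℂ) ^ n * ∑ m ∈ Finset.range (n + 1),
      (-1 : ℂ) ^ m * (stirling1 n m : ℂ) * (α * m + a) ^ (-k) :=
  stmt1_general α a n k
end

section
/- For every integer n ≥ 0 and every k ∈ ℤ, the two-parameter Hurwitz-Lerch type poly-Bernoulli numbers satisfy the orthogonality relation ∑_{m=0}^{n} [n m] · B_m^{(k)}(α, a) = n! · (αn + a)^{-k}. -/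
open PowerSeries Finset

lemma stirling2_eq_zero_of_lt : ∀ {m j : ℕ}, m < j → stirling2 m j = 0 := by
  intro m
  induction m with
  | zero => intro j h; cases j with
    | zero => omega
    | succ j => rfl
  | succ m ih =>
    intro j h
    cases j with
    | zero => omega
    | succ j =>
      show stirling2 m j + (j + 1) * stirling2 m (j + 1) = 0
      rw [ih (by omega), ih (by omega)]; simp

lemma stirling1_eq_zero_of_lt : ∀ {n m : ℕ}, n < m → stirling1 n m = 0 := by
  intro n
  induction n with
  | zero => intro m h; cases m with
    | zero => omega
    | succ m => rfl
  | succ n ih =>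
    intro m h
    cases m with
    | zero => omega
    | succ m =>
      show stirling1 n m + n * stirling1 n (m + 1) = 0
      rw [ih (by omega), ih (by omega)]; simp

lemma stirling_orth (n j : ℕ) :
    ∑ m ∈ Finset.range (n + 1), (-1 : ℤ) ^ m * stirling1 n m * stirling2 m j =
      if n = j then (-1 : ℤ) ^ n else 0 := by
  induction n generalizing j with
  | zero =>
    simp only [zero_add, Finset.sum_range_one]
    cases j with
    | zero => norm_num [show stirling1 0 0 = 1 from rfl, show stirling2 0 0 = 1 from rfl]
    | succ j => norm_num [show stirling1 0 0 = 1 from rfl, show stirling2 0 (j+1) = 0 from rfl]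
  | succ n ih =>
    rw [Finset.sum_range_succ']
    have h0 : (-1 : ℤ) ^ 0 * stirling1 (n + 1) 0 * stirling2 0 j = 0 := by
      simp [stirling1]
    rw [h0, add_zero]
    have hrec : ∀ m, (stirling1 (n + 1) (m + 1) : ℤ) =
        stirling1 n m + n * stirling1 n (m + 1) := by
      intro m; show ((stirling1 n m + n * stirling1 n (m+1) : ℕ) : ℤ) = _; push_cast; ring
    cases j with
    | zero =>
      have : ∀ m ∈ Finset.range (n + 1),
          (-1 : ℤ) ^ (m + 1) * stirling1 (n + 1) (m + 1) * stirling2 (m + 1) 0 = 0 := by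
        intro m _; show _ * ((0 : ℕ) : ℤ) = 0; simp
      rw [Finset.sum_congr rfl this]
      simp
    | succ j =>
      have hs2 : ∀ m, (stirling2 (m + 1) (j + 1) : ℤ) =
          stirling2 m j + (j + 1) * stirling2 m (j + 1) := by
        intro m; show ((stirling2 m j + (j+1) * stirling2 m (j+1) : ℕ) : ℤ) = _
        push_cast; ring
      -- rewrite summand
      have key : ∀ m ∈ Finset.range (n + 1),
          (-1 : ℤ) ^ (m + 1) * stirling1 (n + 1) (m + 1) * stirling2 (m + 1) (j + 1) =
          -((-1 : ℤ) ^ m * stirling1 n m * stirling2 m j)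
          - ((j : ℤ) + 1) * ((-1 : ℤ) ^ m * stirling1 n m * stirling2 m (j + 1))
          - (n : ℤ) * ((-1 : ℤ) ^ m * stirling1 n (m + 1) * stirling2 (m + 1) (j + 1)) := by
        intro m _
        rw [hrec, hs2, pow_succ]
        ring
      rw [Finset.sum_congr rfl key]
      rw [Finset.sum_sub_distrib, Finset.sum_sub_distrib, Finset.sum_neg_distrib,
        ← Finset.mul_sum, ← Finset.mul_sum]
      -- third sum: shift back
      have hthird : ∑ m ∈ Finset.range (n + 1),
          (-1 : ℤ) ^ m * stirling1 n (m + 1) * stirling2 (m + 1) (j + 1) =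
          -(∑ m ∈ Finset.range (n + 1), (-1 : ℤ) ^ m * stirling1 n m * stirling2 m (j + 1))
            + (stirling1 n 0 : ℤ) * stirling2 0 (j + 1) := by
        have := Finset.sum_range_succ'
          (fun m => (-1 : ℤ) ^ m * stirling1 n m * stirling2 m (j + 1)) n
        -- sum_{m<n+1} f m = sum_{i<n} f (i+1) + f 0
        have hlast : (-1 : ℤ) ^ n * stirling1 n (n + 1) * stirling2 (n + 1) (j + 1) = 0 := by
          rw [stirling1_eq_zero_of_lt (by omega)]; simp
        rw [Finset.sum_range_succ, hlast, add_zero]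
        have : ∀ i ∈ Finset.range n,
            (-1 : ℤ) ^ i * stirling1 n (i + 1) * stirling2 (i + 1) (j + 1) =
            -((-1 : ℤ) ^ (i + 1) * stirling1 n (i + 1) * stirling2 (i + 1) (j + 1)) := by
          intro i _; rw [pow_succ]; ring
        rw [Finset.sum_congr rfl this, Finset.sum_neg_distrib]
        rw [Finset.sum_range_succ' (fun m => (-1 : ℤ) ^ m * stirling1 n m * stirling2 m (j + 1)) n]
        push_cast
        ring
      rw [hthird]
      have hz : (stirling2 0 (j + 1) : ℤ) = 0 := by norm_cast
      rw [hz, mul_zero, add_zero]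
      rw [ih j, ih (j + 1)]
      by_cases h1 : n = j
      · subst h1
        simp [pow_succ]
      · by_cases h2 : n = j + 1
        · subst h2; simp
        · have : ¬ (n + 1 = j + 1) := by omega
          simp [h1, h2, this]

theorem stmt3 (α a : ℂ) (hα : α ≠ 0) (ha : ∀ m : ℕ, α * m + a ≠ 0) (n : ℕ) (k : ℤ) :
    ∑ m ∈ Finset.range (n + 1), (stirling1 n m : ℂ) * polyBernoulli k α a m =
      (n.factorial : ℂ) * (α * n + a) ^ (-k) := by
  have hinner : ∀ m ∈ Finset.range (n + 1),
      (stirling1 n m : ℂ) * polyBernoulli k α a m =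
      ∑ j ∈ Finset.range (n + 1),
        ((-1 : ℂ) ^ m * (stirling1 n m : ℂ) * (stirling2 m j : ℂ)) *
          ((-1 : ℂ) ^ j * (j.factorial : ℂ) * (α * j + a) ^ (-k)) := by
    intro m hm
    rw [Finset.mem_range] at hm
    have hsub : Finset.range (m + 1) ⊆ Finset.range (n + 1) := by
      intro x hx; rw [Finset.mem_range] at *; omega
    rw [polyBernoulli]
    rw [← Finset.sum_subset hsub (by
      intro j _ hj
      rw [Finset.mem_range, not_lt] at hj
      rw [stirling2_eq_zero_of_lt (by omega)]
      push_cast; ring)]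
    rw [Finset.mul_sum, Finset.mul_sum]
    apply Finset.sum_congr rfl
    intro j _; ring
  rw [Finset.sum_congr rfl hinner, Finset.sum_comm]
  have horth : ∀ j : ℕ, ∑ m ∈ Finset.range (n + 1),
      (-1 : ℂ) ^ m * (stirling1 n m : ℂ) * (stirling2 m j : ℂ) =
      if n = j then (-1 : ℂ) ^ n else 0 := by
    intro j
    have h := congrArg (fun z : ℤ => (z : ℂ)) (stirling_orth n j)
    push_cast at h
    convert h using 2 <;> split <;> simp
  calc ∑ j ∈ Finset.range (n + 1), ∑ m ∈ Finset.range (n + 1),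
        ((-1 : ℂ) ^ m * (stirling1 n m : ℂ) * (stirling2 m j : ℂ)) *
          ((-1 : ℂ) ^ j * (j.factorial : ℂ) * (α * j + a) ^ (-k))
      = ∑ j ∈ Finset.range (n + 1), (if j = n then (-1 : ℂ) ^ n else 0) *
          ((-1 : ℂ) ^ j * (j.factorial : ℂ) * (α * j + a) ^ (-k)) := by
        apply Finset.sum_congr rfl
        intro j _
        rw [show (if j = n then (-1 : ℂ) ^ n else 0) = if n = j then (-1 : ℂ) ^ n else 0 by
          split <;> split <;> first | rfl | omega, ← horth j, Finset.sum_mul]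
    _ = (n.factorial : ℂ) * (α * n + a) ^ (-k) := by
        rw [Finset.sum_eq_single n
          (fun b _ hb => by simp [hb])
          (fun h => absurd (Finset.self_mem_range_succ n) h)]
        rw [if_pos rfl, ← mul_assoc, ← mul_assoc, ← mul_pow]
        simp
end

section
/- For every integer n ≥ 0 and every k ∈ ℤ, the two-parameter Hurwitz-Lerch type poly-Cauchy numbers of the first kind satisfy the orthogonality relation ∑_{m=0}^{n} {n m} · c_m^{(k)}(α, a) = (αn + a)^{-k}. -/
open PowerSeries Finset

lemma stirling1_eq_zero : ∀ {n j : ℕ}, n < j → stirling1 n j = 0 := by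
  intro n
  induction n with
  | zero =>
    intro j h
    cases j with
    | zero => omega
    | succ j => rfl
  | succ n ih =>
    intro j h
    cases j with
    | zero => omega
    | succ j => simp [stirling1, ih (show n < j by omega), ih (show n < j + 1 by omega)]

lemma stirling2_eq_zero : ∀ {n j : ℕ}, n < j → stirling2 n j = 0 := by
  intro n
  induction n with
  | zero =>
    intro j h
    cases j with
    | zero => omega
    | succ j => rfl
  | succ n ih =>
    intro j h
    cases j with
    | zero => omega
    | succ j => simp [stirling2, ih (show n < j by omega), ih (show n < j + 1 by omega)]

lemma key (n : ℕ) : ∀ j : ℕ,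
    ∑ m ∈ Finset.range (n + 1), (-1 : ℂ) ^ m * (stirling2 n m : ℂ) * (stirling1 m j : ℂ)
      = (-1 : ℂ) ^ n * (if n = j then 1 else 0) := by
  induction n with
  | zero =>
    intro j
    cases j with
    | zero => simp [stirling1, stirling2]
    | succ j => simp [stirling1, stirling2]
  | succ n ih =>
    intro j
    cases j with
    | zero =>
      have h : ∀ m ∈ Finset.range (n + 2),
          (-1 : ℂ) ^ m * (stirling2 (n + 1) m : ℂ) * (stirling1 m 0 : ℂ) = 0 := by
        intro m _
        cases m with
        | zero => simp [stirling2]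
        | succ m => simp [stirling1]
      rw [Finset.sum_eq_zero h]
      simp
    | succ j =>
      rw [Finset.sum_range_succ']
      have h0 : (stirling2 (n + 1) 0 : ℂ) = 0 := by simp [stirling2]
      set u : ℕ → ℂ := fun m => (-1 : ℂ) ^ m * m * (stirling2 n m : ℂ) * (stirling1 m (j + 1) : ℂ) with hu
      have hterm : ∀ m ∈ Finset.range (n + 1),
          (-1 : ℂ) ^ (m + 1) * (stirling2 (n + 1) (m + 1) : ℂ) * (stirling1 (m + 1) (j + 1) : ℂ)
            = (-((-1 : ℂ) ^ m * (stirling2 n m : ℂ) * (stirling1 m j : ℂ))) + (u (m + 1) - u m) := by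
        intro m _
        simp only [hu, stirling1, stirling2]
        push_cast
        ring
      rw [Finset.sum_congr rfl hterm, Finset.sum_add_distrib, Finset.sum_range_sub u (n + 1),
        Finset.sum_neg_distrib, ih j]
      have hun : u (n + 1) = 0 := by
        simp [hu, stirling2_eq_zero (Nat.lt_succ_self n)]
      have hu0 : u 0 = 0 := by simp [hu]
      rw [hun, hu0, h0]
      have hiff : (n + 1 = j + 1) ↔ (n = j) := by omega
      by_cases h : n = j
      · simp [h, hiff]
        ring
      · simp [h, hiff]

theorem stmt4 (α a : ℂ) (hα : α ≠ 0) (ha : ∀ m : ℕ, α * m + a ≠ 0) (n : ℕ) (k : ℤ) :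
    ∑ m ∈ Finset.range (n + 1), (stirling2 n m : ℂ) * polyCauchy1 k α a m =
      (α * n + a) ^ (-k) := by
  have hstep : ∀ m ∈ Finset.range (n + 1),
      (stirling2 n m : ℂ) * polyCauchy1 k α a m
        = ∑ j ∈ Finset.range (n + 1),
            (stirling2 n m : ℂ) * ((-1 : ℂ) ^ m *
              ((-1 : ℂ) ^ j * (stirling1 m j : ℂ) * (α * j + a) ^ (-k))) := by
    intro m hm
    rw [Finset.mem_range] at hm
    rw [polyCauchy1, Finset.mul_sum]
    have hsub : Finset.range (m + 1) ⊆ Finset.range (n + 1) :=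
      Finset.range_subset_range.mpr (by omega)
    rw [Finset.sum_subset hsub]
    · rw [Finset.mul_sum]
    · intro j _ hj
      rw [Finset.mem_range] at hj
      have : stirling1 m j = 0 := stirling1_eq_zero (by omega)
      simp [this]
  rw [Finset.sum_congr rfl hstep, Finset.sum_comm]
  have hinner : ∀ j ∈ Finset.range (n + 1),
      ∑ m ∈ Finset.range (n + 1),
          (stirling2 n m : ℂ) * ((-1 : ℂ) ^ m *
            ((-1 : ℂ) ^ j * (stirling1 m j : ℂ) * (α * j + a) ^ (-k)))
        = (-1 : ℂ) ^ j * (α * j + a) ^ (-k) * ((-1 : ℂ) ^ n * (if n = j then 1 else 0)) := by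
    intro j _
    rw [← key n j, Finset.mul_sum]
    apply Finset.sum_congr rfl
    intro m _
    ring
  rw [Finset.sum_congr rfl hinner]
  rw [Finset.sum_eq_single n]
  · have h1 : (-1 : ℂ) ^ n * (-1 : ℂ) ^ n = 1 := by
      rw [← pow_add]
      exact Even.neg_one_pow ⟨n, rfl⟩
    rw [if_pos rfl]
    linear_combination (α * (n : ℂ) + a) ^ (-k) * h1
  · intro j _ hj
    simp [Ne.symm hj]
  · intro h
    simp at h
end

section
/- For every integer n ≥ 0 and every k ∈ ℤ, the two-parameter Hurwitz-Lerch type poly-Cauchy numbers of the first kind satisfy the recurrence c_{n+1}^{(k)}(α,a) + n · c_n^{(k)}(α,a) = ∑_{j=0}^{n} (-1)^{n-j} · [n j] · (α(j+1) + a)^{-k}. -/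
open PowerSeries Finset

theorem stmt13 (α a : ℂ) (hα : α ≠ 0) (ha : ∀ m : ℕ, α * m + a ≠ 0) (n : ℕ) (k : ℤ) :
    polyCauchy1 k α a (n + 1) + n * polyCauchy1 k α a n =
      ∑ j ∈ Finset.range (n + 1),
        (-1 : ℂ) ^ (n - j) * (stirling1 n j : ℂ) * (α * (j + 1) + a) ^ (-k) := by
  have hzlt : ∀ {n m : ℕ}, n < m → stirling1 n m = 0 := by
    intro n
    induction n with
    | zero =>
      intro m h
      cases m with
      | zero => omega
      | succ m => rfl
    | succ n ih =>
      intro m h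
      cases m with
      | zero => omega
      | succ m =>
        show stirling1 n m + n * stirling1 n (m + 1) = 0
        rw [ih (by omega), ih (by omega)]
        simp
  -- F m is the summand of polyCauchy1 at n
  set F : ℕ → ℂ := fun m => (-1 : ℂ) ^ m * (stirling1 n m : ℂ) * (α * m + a) ^ (-k) with hF
  have key : (n : ℂ) * ∑ j ∈ Finset.range (n + 1), F (j + 1)
      = (n : ℂ) * ∑ m ∈ Finset.range (n + 1), F m := by
    cases n with
    | zero => simp
    | succ n' =>
      congr 1
      rw [Finset.sum_range_succ, Finset.sum_range_succ' F]
      have h1 : F (n' + 1 + 1) = 0 := by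
        simp [hF, hzlt (show n' + 1 < n' + 2 by omega)]
      have h2 : F 0 = 0 := by
        have : stirling1 (n' + 1) 0 = 0 := rfl
        simp [hF, this]
      rw [h1, h2]
  have expand : polyCauchy1 k α a (n + 1) =
      (∑ j ∈ Finset.range (n + 1),
        (-1 : ℂ) ^ (n - j) * (stirling1 n j : ℂ) * (α * (j + 1) + a) ^ (-k))
      + (-1 : ℂ) ^ (n + 1) * ((n : ℂ) * ∑ j ∈ Finset.range (n + 1), F (j + 1)) := by
    unfold polyCauchy1
    rw [Finset.sum_range_succ' _ (n + 1)]
    have h0 : stirling1 (n + 1) 0 = 0 := rfl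
    rw [h0]
    push_cast
    rw [mul_add, Finset.mul_sum, Finset.mul_sum, Finset.mul_sum]
    simp only [pow_zero, one_mul, zero_mul, mul_zero, add_zero]
    rw [← Finset.sum_add_distrib]
    apply Finset.sum_congr rfl
    intro j hj
    have hjn : j ≤ n := by simpa [Finset.mem_range, Nat.lt_succ_iff] using hj
    have hs : stirling1 (n + 1) (j + 1) = stirling1 n j + n * stirling1 n (j + 1) := rfl
    have hsign : (-1 : ℂ) ^ (n - j) = (-1 : ℂ) ^ n * (-1 : ℂ) ^ j := by
      have : (-1 : ℂ) ^ (n - j) * (-1 : ℂ) ^ j = (-1 : ℂ) ^ n := by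
        rw [← pow_add, Nat.sub_add_cancel hjn]
      have hj2 : (-1 : ℂ) ^ j * (-1 : ℂ) ^ j = 1 := by
        rw [← pow_add]
        exact Even.neg_one_pow ⟨j, rfl⟩
      calc (-1 : ℂ) ^ (n - j) = (-1 : ℂ) ^ (n - j) * ((-1:ℂ)^j * (-1:ℂ)^j) := by
            rw [hj2, mul_one]
        _ = ((-1 : ℂ) ^ (n - j) * (-1:ℂ)^j) * (-1:ℂ)^j := by ring
        _ = (-1 : ℂ) ^ n * (-1 : ℂ) ^ j := by rw [this]
    rw [hs, hF]
    push_cast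
    rw [hsign]
    ring
  rw [expand, key]
  have : (n : ℂ) * polyCauchy1 k α a n
      = - ((-1 : ℂ) ^ (n + 1) * ((n : ℂ) * ∑ m ∈ Finset.range (n + 1), F m)) := by
    unfold polyCauchy1
    rw [hF]
    ring
  rw [this]
  ring
end

section
/- For every integer n ≥ 0 and every k ∈ ℤ, the two-parameter Hurwitz-Lerch type poly-Cauchy numbers of the second kind satisfy the recurrence ĉ_{n+1}^{(k)}(α,a) + n · ĉ_n^{(k)}(α,a) = (-1)^{n+1} ∑_{j=0}^{n} [n j] · (α(j+1) + a)^{-k}. -/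
open PowerSeries Finset

theorem stmt14 (α a : ℂ) (hα : α ≠ 0) (ha : ∀ m : ℕ, α * m + a ≠ 0) (n : ℕ) (k : ℤ) :
    polyCauchy2 k α a (n + 1) + n * polyCauchy2 k α a n =
      (-1 : ℂ) ^ (n + 1) * ∑ j ∈ Finset.range (n + 1),
        (stirling1 n j : ℂ) * (α * (j + 1) + a) ^ (-k) := by
  have hlt : ∀ {p q : ℕ}, p < q → stirling1 p q = 0 := by
    intro p
    induction p with
    | zero => intro q h; cases q with | zero => omega | succ q => rfl
    | succ p ih =>
      intro q h
      cases q with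
      | zero => omega
      | succ q =>
        have h1 : p < q := Nat.lt_of_succ_lt_succ h
        simp [stirling1, ih h1, ih (Nat.lt_succ_of_lt h1)]
  set f : ℕ → ℂ := fun m => (α * m + a) ^ (-k) with hf
  have hshift : (n : ℂ) * ∑ j ∈ Finset.range (n + 1), (stirling1 n (j + 1) : ℂ) * f (j + 1)
      = (n : ℂ) * ∑ m ∈ Finset.range (n + 1), (stirling1 n m : ℂ) * f m := by
    have h1 : ∑ m ∈ Finset.range (n + 2), (stirling1 n m : ℂ) * f m
        = (∑ j ∈ Finset.range (n + 1), (stirling1 n (j + 1) : ℂ) * f (j + 1))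
          + (stirling1 n 0 : ℂ) * f 0 := Finset.sum_range_succ' _ (n + 1)
    have h2 : ∑ m ∈ Finset.range (n + 2), (stirling1 n m : ℂ) * f m
        = (∑ m ∈ Finset.range (n + 1), (stirling1 n m : ℂ) * f m)
          + (stirling1 n (n + 1) : ℂ) * f (n + 1) := Finset.sum_range_succ _ (n + 1)
    have h3 : stirling1 n (n + 1) = 0 := hlt (Nat.lt_succ_self n)
    have h4 : (n : ℂ) * (stirling1 n 0 : ℂ) = 0 := by
      cases n with
      | zero => simp
      | succ p => simp [stirling1]
    have := h1.symm.trans h2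
    rw [h3] at this
    simp only [Nat.cast_zero, zero_mul, add_zero] at this
    calc (n : ℂ) * ∑ j ∈ Finset.range (n + 1), (stirling1 n (j + 1) : ℂ) * f (j + 1)
        = (n : ℂ) * ((∑ j ∈ Finset.range (n + 1), (stirling1 n (j + 1) : ℂ) * f (j + 1))
            + (stirling1 n 0 : ℂ) * f 0) - (n : ℂ) * (stirling1 n 0 : ℂ) * f 0 := by ring
      _ = (n : ℂ) * ∑ m ∈ Finset.range (n + 1), (stirling1 n m : ℂ) * f m := by
          rw [this, h4]; ring
  have key : ∑ m ∈ Finset.range (n + 2), (stirling1 (n + 1) m : ℂ) * f m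
      = (∑ j ∈ Finset.range (n + 1), (stirling1 n j : ℂ) * f (j + 1))
        + (n : ℂ) * ∑ m ∈ Finset.range (n + 1), (stirling1 n m : ℂ) * f m := by
    rw [Finset.sum_range_succ' _ (n + 1)]
    have h0 : (stirling1 (n + 1) 0 : ℂ) = 0 := by simp [stirling1]
    rw [h0, zero_mul, add_zero, ← hshift]
    have : ∀ j, (stirling1 (n + 1) (j + 1) : ℂ) * f (j + 1)
        = (stirling1 n j : ℂ) * f (j + 1) + (n : ℂ) * ((stirling1 n (j + 1) : ℂ) * f (j + 1)) := by
      intro j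
      have : stirling1 (n + 1) (j + 1) = stirling1 n j + n * stirling1 n (j + 1) := rfl
      rw [this]; push_cast; ring
    rw [Finset.sum_congr rfl fun j _ => this j, Finset.sum_add_distrib, Finset.mul_sum]
  unfold polyCauchy2
  have hfm : ∀ m : ℕ, (α * (m : ℂ) + a) ^ (-k) = f m := fun _ => rfl
  have hfj : ∀ j : ℕ, (α * ((j : ℂ) + 1) + a) ^ (-k) = f (j + 1) := by
    intro j; rw [hf]; push_cast; ring_nf
  simp only [hfm, hfj]
  rw [show n + 1 + 1 = n + 2 from rfl, key]
  ring
end
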